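/- Let μ, ν be Borel probability measures on a separable Hilbert space X with finite p-th moments. The function θ ↦ W_p^p(P_θ#μ, P_θ#ν) is Lipschitz on the unit sphere with Lipschitz constant p·2^{p−1}·max{M_p(μ), M_p(ν)}^{(p−1)/p}·((M_p(μ))^{1/p} + (M_p(ν))^{1/p}). -/

import Mathlib

open MeasureTheory ENNReal Metric Filter
open scoped NNReal Topology

noncomputable section

/-- The `p`-cost of a transport plan `π`. -/
def transportCostE {E : Type*} [MeasurableSpace E] [Dist E] (p : ℝ)
    (π : Measure (E × E)) : ℝ≥0∞ :=
  ∫⁻ z, ENNReal.ofReal (dist z.1 z.2 ^ p) ∂π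

/-- The `p`-th power of the `p`-Wasserstein distance, as an extended real:
the infimum of the `p`-cost over all couplings of `μ` and `ν`. -/
def WassersteinE {E : Type*} [MeasurableSpace E] [Dist E] (p : ℝ)
    (μ ν : Measure E) : ℝ≥0∞ :=
  ⨅ (π : Measure (E × E)) (_ : π.map Prod.fst = μ) (_ : π.map Prod.snd = ν),
    transportCostE p π

/-- The `p`-Wasserstein distance. -/
def Wp {E : Type*} [MeasurableSpace E] [Dist E] (p : ℝ) (μ ν : Measure E) : ℝ :=
  (WassersteinE p μ ν).toReal ^ (1 / p)

/-- The `p`-th moment, as an extended real. -/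
def MpE {E : Type*} [MeasurableSpace E] [Norm E] (p : ℝ) (μ : Measure E) : ℝ≥0∞ :=
  ∫⁻ x, ENNReal.ofReal (‖x‖ ^ p) ∂μ

/-- The `p`-th moment `M_p(μ) = ∫ ‖x‖^p dμ`. -/
def Mp {E : Type*} [MeasurableSpace E] [Norm E] (p : ℝ) (μ : Measure E) : ℝ :=
  (MpE p μ).toReal

/-- The projection `P_θ(x) = ⟨θ, x⟩`. -/
def proj {X : Type*} [NormedAddCommGroup X] [InnerProductSpace ℝ X] (θ : X) (x : X) : ℝ :=
  inner ℝ θ x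

/-- The `p`-th power of the sliced Wasserstein distance with respect to the measure `γS`
on the unit sphere, as an extended real. -/
def SWpE {X : Type*} [NormedAddCommGroup X] [InnerProductSpace ℝ X] [MeasurableSpace X]
    (p : ℝ) (γS : Measure (sphere (0 : X) 1)) (μ ν : Measure X) : ℝ≥0∞ :=
  (γS Set.univ)⁻¹ *
    ∫⁻ θ, WassersteinE p (μ.map (proj (θ : X))) (ν.map (proj (θ : X))) ∂γS

/-- The sliced Wasserstein distance with respect to the measure `γS` on the unit sphere. -/
def SWp {X : Type*} [NormedAddCommGroup X] [InnerProductSpace ℝ X] [MeasurableSpace X]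
    (p : ℝ) (γS : Measure (sphere (0 : X) 1)) (μ ν : Measure X) : ℝ :=
  (SWpE p γS μ ν).toReal ^ (1 / p)

/-- Empirical measure of the first `n` samples `ξ 0, ..., ξ (n-1)` evaluated at `ω`. -/
def empMeasure {Ω E : Type*} [MeasurableSpace E] (ξ : ℕ → Ω → E) (n : ℕ) (ω : Ω) :
    Measure E :=
  (n : ℝ≥0∞)⁻¹ • ∑ k ∈ Finset.range n, Measure.dirac (ξ k ω)

end
noncomputable section AuxStmt5
open ProbabilityTheory
open scoped RealInnerProductSpace
set_option linter.unusedSectionVars false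
set_option maxHeartbeats 1000000

private lemma aux_rpow_sub (p : ℝ) (hp : 1 ≤ p) {a b : ℝ} (hb : 0 ≤ b) (hab : b ≤ a) :
    a ^ p - b ^ p ≤ p * a ^ (p - 1) * (a - b) := by
  have ha : 0 ≤ a := hb.trans hab
  rcases eq_or_lt_of_le ha with h0 | h0
  · have : a = 0 := h0.symm
    subst this
    have : b = 0 := le_antisymm hab hb
    subst this
    simp [Real.zero_rpow (by positivity : p ≠ 0)]
  · have ht0 : 0 ≤ b / a := by positivity
    have ht1 : b / a ≤ 1 := (div_le_one h0).2 hab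
    have hber := one_add_mul_self_le_rpow_one_add (by linarith : (-1:ℝ) ≤ b / a - 1) hp
    rw [add_sub_cancel] at hber
    have hbap : (b / a) ^ p = b ^ p / a ^ p := Real.div_rpow hb ha p
    rw [hbap] at hber
    have hap : 0 < a ^ p := Real.rpow_pos_of_pos h0 p
    have key : a ^ p * (1 + p * (b / a - 1)) ≤ b ^ p := by
      rw [← le_div_iff₀' hap] at *
      linarith [hber]
    have hexp : a ^ p = a ^ (p - 1) * a := by
      rw [← Real.rpow_add_one (ne_of_gt h0)]
      ring_nf
    calc a ^ p - b ^ p ≤ a ^ p - a ^ p * (1 + p * (b / a - 1)) := by linarith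
      _ = a ^ p * (p * (1 - b / a)) := by ring
      _ = p * a ^ (p - 1) * (a - b) := by
          rw [hexp]; field_simp

section HilbertAux

variable {X : Type*} [NormedAddCommGroup X] [InnerProductSpace ℝ X]
    [CompleteSpace X] [SecondCountableTopology X] [MeasurableSpace X] [BorelSpace X]

private lemma aux_pointwise (p : ℝ) (hp : 1 ≤ p) (θ η : X) (hθ : ‖θ‖ ≤ 1) (hη : ‖η‖ ≤ 1)
    (z : X) :
    |⟪θ, z⟫| ^ p ≤ |⟪η, z⟫| ^ p + p * ‖θ - η‖ * ‖z‖ ^ p := by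
  set a := |⟪θ, z⟫| with ha
  set b := |⟪η, z⟫| with hb
  have ha0 : 0 ≤ a := abs_nonneg _
  have hb0 : 0 ≤ b := abs_nonneg _
  have hrhs : 0 ≤ p * ‖θ - η‖ * ‖z‖ ^ p := by positivity
  rcases le_total a b with h | h
  · have := Real.rpow_le_rpow ha0 h (by linarith : (0:ℝ) ≤ p)
    linarith
  · have haz : a ≤ ‖z‖ := by
      calc a ≤ ‖θ‖ * ‖z‖ := abs_real_inner_le_norm θ z
        _ ≤ 1 * ‖z‖ := by gcongr
        _ = ‖z‖ := one_mul _
    have hab : a - b ≤ ‖θ - η‖ * ‖z‖ := by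
      have h1 : a - b ≤ |⟪θ, z⟫ - ⟪η, z⟫| := by
        have := abs_sub_abs_le_abs_sub (⟪θ, z⟫) (⟪η, z⟫)
        linarith [this]
      calc a - b ≤ |⟪θ - η, z⟫| := by rwa [inner_sub_left]
        _ ≤ ‖θ - η‖ * ‖z‖ := abs_real_inner_le_norm _ _
    have key := aux_rpow_sub p hp hb0 h
    have hmono : a ^ (p - 1) ≤ ‖z‖ ^ (p - 1) :=
      Real.rpow_le_rpow ha0 haz (by linarith)
    have h2 : p * a ^ (p-1) * (a - b) ≤ p * ‖z‖ ^ (p-1) * (‖θ - η‖ * ‖z‖) := by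
      have hab0 : 0 ≤ a - b := by linarith
      have hmm := mul_le_mul hmono hab (by linarith) (by positivity)
      have hp0 : (0:ℝ) ≤ p := by linarith
      calc p * a ^ (p-1) * (a - b) = p * (a ^ (p-1) * (a - b)) := by ring
        _ ≤ p * (‖z‖ ^ (p-1) * (‖θ - η‖ * ‖z‖)) := by
            apply mul_le_mul_of_nonneg_left hmm hp0
        _ = p * ‖z‖ ^ (p-1) * (‖θ - η‖ * ‖z‖) := by ring
    have h3 : p * ‖z‖ ^ (p-1) * (‖θ - η‖ * ‖z‖) = p * ‖θ - η‖ * (‖z‖ ^ (p-1) * ‖z‖) := by ring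
    rcases eq_or_ne z 0 with rfl | hz
    · simp only [norm_zero] at h3 ⊢
      have hbp : b ^ p ≥ 0 := Real.rpow_nonneg hb0 p
      have haz0 : a = 0 := le_antisymm (by simpa using haz) ha0
      rw [haz0, Real.zero_rpow (by positivity : p ≠ 0)]
      positivity
    · have h4 : ‖z‖ ^ (p-1) * ‖z‖ = ‖z‖ ^ p := by
        rw [← Real.rpow_add_one (by simpa using hz : ‖z‖ ≠ 0)]
        ring_nf
      rw [h3, h4] at h2
      linarith

private lemma measurable_proj' (θ : X) : Measurable (proj θ) :=
  (continuous_const.inner continuous_id).measurable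

private lemma aux_ofReal_rpow_norm (p : ℝ) (hp : 1 ≤ p) (x : X) :
    ENNReal.ofReal (‖x‖ ^ p) = (‖x‖₊ : ℝ≥0∞) ^ p := by
  rw [← enorm_eq_nnnorm, ← ofReal_norm, ENNReal.ofReal_rpow_of_nonneg (norm_nonneg x) (by linarith)]

private lemma aux_meas_ennrpow (p : ℝ) : Measurable fun x : X => (‖x‖₊ : ℝ≥0∞) ^ p :=
  (ENNReal.continuous_rpow_const.measurable).comp measurable_nnnorm.coe_nnreal_ennreal

private lemma aux_meas_norm_cost (p : ℝ) (hp : 0 ≤ p) :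
    Measurable fun z : X × X => ENNReal.ofReal (‖z.1 - z.2‖ ^ p) := by
  have hc : Continuous fun z : X × X => ‖z.1 - z.2‖ ^ p :=
    Continuous.rpow_const (continuous_fst.sub continuous_snd).norm fun _ => Or.inr hp
  exact (ENNReal.continuous_ofReal.comp hc).measurable

private lemma aux_minkowski (p : ℝ) (hp : 1 ≤ p) (μ ν : Measure X) (γ : Measure (X × X))
    (h1 : γ.map Prod.fst = μ) (h2 : γ.map Prod.snd = ν) :
    ∫⁻ z, ENNReal.ofReal (‖z.1 - z.2‖ ^ p) ∂γ ≤
      ((MpE p μ) ^ (1/p) + (MpE p ν) ^ (1/p)) ^ p := by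
  have hp0 : (0:ℝ) < p := by linarith
  set f : X × X → ℝ≥0∞ := fun z => (‖z.1‖₊ : ℝ≥0∞) with hf
  set g : X × X → ℝ≥0∞ := fun z => (‖z.2‖₊ : ℝ≥0∞) with hg
  have hfm : AEMeasurable f γ := (measurable_fst.nnnorm.coe_nnreal_ennreal).aemeasurable
  have hgm : AEMeasurable g γ := (measurable_snd.nnnorm.coe_nnreal_ennreal).aemeasurable
  have hmink := ENNReal.lintegral_Lp_add_le hfm hgm hp
  have hpt : ∀ z : X × X, ENNReal.ofReal (‖z.1 - z.2‖ ^ p) ≤ (f z + g z) ^ p := by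
    intro z
    rw [aux_ofReal_rpow_norm p hp]
    apply ENNReal.rpow_le_rpow _ (le_of_lt hp0)
    calc (‖z.1 - z.2‖₊ : ℝ≥0∞) ≤ ((‖z.1‖₊ + ‖z.2‖₊ : ℝ≥0) : ℝ≥0∞) :=
          ENNReal.coe_le_coe.2 (nnnorm_sub_le z.1 z.2)
      _ = f z + g z := by push_cast; rfl
  have hle : ∫⁻ z, ENNReal.ofReal (‖z.1 - z.2‖ ^ p) ∂γ ≤ ∫⁻ z, (f z + g z) ^ p ∂γ :=
    lintegral_mono hpt
  have hmeas : Measurable fun x : X => ENNReal.ofReal (‖x‖ ^ p) := by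
    simp only [aux_ofReal_rpow_norm p hp]; exact aux_meas_ennrpow p
  have hμe : ∫⁻ z, f z ^ p ∂γ = MpE p μ := by
    simp only [MpE, ← h1]
    rw [lintegral_map hmeas measurable_fst]
    exact lintegral_congr fun z => (aux_ofReal_rpow_norm p hp z.1).symm
  have hνe : ∫⁻ z, g z ^ p ∂γ = MpE p ν := by
    simp only [MpE, ← h2]
    rw [lintegral_map hmeas measurable_snd]
    exact lintegral_congr fun z => (aux_ofReal_rpow_norm p hp z.2).symm
  rw [hμe, hνe] at hmink
  calc ∫⁻ z, ENNReal.ofReal (‖z.1 - z.2‖ ^ p) ∂γ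
      ≤ ∫⁻ z, (f z + g z) ^ p ∂γ := hle
    _ = ((∫⁻ z, (f z + g z) ^ p ∂γ) ^ (1/p)) ^ p := by
        rw [← ENNReal.rpow_mul, one_div, inv_mul_cancel₀ (ne_of_gt hp0), ENNReal.rpow_one]
    _ ≤ ((MpE p μ) ^ (1/p) + (MpE p ν) ^ (1/p)) ^ p :=
        ENNReal.rpow_le_rpow hmink (le_of_lt hp0)

private lemma aux_wass_le (p : ℝ) (hp : 1 ≤ p) (θ : X) (μ ν : Measure X) (γ : Measure (X × X))
    (h1 : γ.map Prod.fst = μ) (h2 : γ.map Prod.snd = ν) :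
    WassersteinE p (μ.map (proj θ)) (ν.map (proj θ)) ≤
      ∫⁻ z, ENNReal.ofReal (|proj θ z.1 - proj θ z.2| ^ p) ∂γ := by
  set T : X × X → ℝ × ℝ := fun z => (proj θ z.1, proj θ z.2) with hT
  have hTm : Measurable T := ((measurable_proj' θ).comp measurable_fst).prodMk
    ((measurable_proj' θ).comp measurable_snd)
  set π : Measure (ℝ × ℝ) := γ.map T with hπ
  have hm1 : π.map Prod.fst = μ.map (proj θ) := by
    rw [hπ, Measure.map_map measurable_fst hTm, ← h1,
      Measure.map_map (measurable_proj' θ) measurable_fst]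
    rfl
  have hm2 : π.map Prod.snd = ν.map (proj θ) := by
    rw [hπ, Measure.map_map measurable_snd hTm, ← h2,
      Measure.map_map (measurable_proj' θ) measurable_snd]
    rfl
  have hcost : transportCostE p π = ∫⁻ z, ENNReal.ofReal (|proj θ z.1 - proj θ z.2| ^ p) ∂γ := by
    rw [transportCostE, hπ, lintegral_map _ hTm]
    · simp only [T, Real.dist_eq]
    · exact (ENNReal.continuous_ofReal.comp ((continuous_fst.dist continuous_snd).rpow_const
        (fun _ => Or.inr (by linarith)))).measurable
  rw [← hcost]
  exact iInf_le_of_le π (iInf_le_of_le hm1 (iInf_le _ hm2))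

private lemma aux_disint (f : X → ℝ) (hf : Measurable f) (μ : Measure X)
    [IsProbabilityMeasure μ] :
    ∃ κ : Kernel ℝ X, IsMarkovKernel κ ∧
      (∀ A : Set X, MeasurableSet A → ∫⁻ s, κ s A ∂(μ.map f) = μ A) ∧
      (∀ᵐ s ∂(μ.map f), κ s {x | f x ≠ s} = 0) ∧
      Measurable (fun s => κ s {x | f x ≠ s}) := by
  set g : X → ℝ × X := fun x => (f x, x) with hg
  have hgm : Measurable g := hf.prodMk measurable_id
  set ρ : Measure (ℝ × X) := μ.map g with hρ
  haveI : IsProbabilityMeasure ρ := Measure.isProbabilityMeasure_map hgm.aemeasurable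
  have hfst : ρ.fst = μ.map f := by
    rw [Measure.fst, hρ, Measure.map_map measurable_fst hgm]
    rfl
  set κ := ρ.condKernel with hκ
  have hdis : ρ.fst ⊗ₘ κ = ρ := ρ.disintegrate _
  set T : Set (ℝ × X) := {q | f q.2 ≠ q.1} with hT
  have hTm : MeasurableSet T :=
    (measurableSet_eq_fun (hf.comp measurable_snd) measurable_fst).compl
  have hmk : ∀ s : ℝ, Prod.mk s ⁻¹' T = {x | f x ≠ s} := fun s => rfl
  have hmeasT : Measurable (fun s => κ s {x | f x ≠ s}) := by
    have := Kernel.measurable_kernel_prodMk_left (κ := κ) hTm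
    simpa [hmk] using this
  refine ⟨κ, inferInstance, ?_, ?_, hmeasT⟩
  · intro A hA
    have h1 : (ρ.fst ⊗ₘ κ) (Set.univ ×ˢ A) = ∫⁻ s, κ s A ∂(μ.map f) := by
      rw [Measure.compProd_apply (MeasurableSet.univ.prod hA), hfst]
      congr 1
      ext s
      congr 1
      ext x
      simp
    have h2 : ρ (Set.univ ×ˢ A) = μ A := by
      rw [hρ, Measure.map_apply hgm (MeasurableSet.univ.prod hA)]
      congr 1
      ext x
      simp [hg]
    rw [← h1, hdis, h2]
  · have hρT : ρ T = 0 := by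
      rw [hρ, Measure.map_apply hgm hTm]
      have he : g ⁻¹' T = ∅ := by
        ext x; simp [hT, hg]
      rw [he]
      simp
    rw [← hdis, Measure.compProd_apply hTm, hfst] at hρT
    have := (lintegral_eq_zero_iff (Kernel.measurable_kernel_prodMk_left hTm)).1 hρT
    filter_upwards [this] with s hs
    rw [← hmk s]
    exact hs

private lemma aux_meas_cost (p : ℝ) (hp : 0 ≤ p) (θ : X) :
    Measurable fun z : X × X => ENNReal.ofReal (|proj θ z.1 - proj θ z.2| ^ p) := by
  have hc : Continuous fun z : X × X => |proj θ z.1 - proj θ z.2| ^ p := by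
    apply Continuous.rpow_const
    · exact (((continuous_const.inner continuous_id).comp continuous_fst).sub
        ((continuous_const.inner continuous_id).comp continuous_snd)).abs
    · exact fun _ => Or.inr hp
  exact (ENNReal.continuous_ofReal.comp hc).measurable

private lemma aux_lift (p : ℝ) (hp : 1 ≤ p) (η : X) (μ ν : Measure X)
    [IsProbabilityMeasure μ] [IsProbabilityMeasure ν]
    (π : Measure (ℝ × ℝ)) [IsProbabilityMeasure π]
    (h1 : π.map Prod.fst = μ.map (proj η)) (h2 : π.map Prod.snd = ν.map (proj η)) :
    ∃ γ : Measure (X × X), γ.map Prod.fst = μ ∧ γ.map Prod.snd = ν ∧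
      ∫⁻ z, ENNReal.ofReal (|proj η z.1 - proj η z.2| ^ p) ∂γ = transportCostE p π := by
  obtain ⟨κμ, hκμM, hκμint, hκμae, hκμmeas⟩ := aux_disint (proj η) (measurable_proj' η) μ
  obtain ⟨κν, hκνM, hκνint, hκνae, hκνmeas⟩ := aux_disint (proj η) (measurable_proj' η) ν
  haveI := hκμM; haveI := hκνM
  set K : Kernel (ℝ × ℝ) (X × X) :=
    (κμ.comap Prod.fst measurable_fst) ×ₖ (κν.comap Prod.snd measurable_snd) with hK
  haveI : IsMarkovKernel K := by
    rw [hK]; infer_instance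
  have hKq : ∀ q : ℝ × ℝ, K q = (κμ q.1).prod (κν q.2) := by
    intro q
    rw [hK, Kernel.prod_apply, Kernel.comap_apply, Kernel.comap_apply]
  set γ : Measure (X × X) := (π ⊗ₘ K).map Prod.snd with hγ
  have hγfst : γ.map Prod.fst = μ := by
    ext A hA
    rw [hγ, Measure.map_map measurable_fst measurable_snd,
      Measure.map_apply (measurable_fst.comp measurable_snd) hA,
      Measure.compProd_apply ((measurable_fst.comp measurable_snd) hA)]
    have hpre : ∀ q : ℝ × ℝ,
        Prod.mk q ⁻¹' (((Prod.fst ∘ Prod.snd : (ℝ × ℝ) × (X × X) → X)) ⁻¹' A)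
          = A ×ˢ (Set.univ : Set X) := by
      intro q; ext z; simp
    calc ∫⁻ q, K q (Prod.mk q ⁻¹' ((Prod.fst ∘ Prod.snd) ⁻¹' A)) ∂π
        = ∫⁻ q, κμ q.1 A ∂π := by
          apply lintegral_congr
          intro q
          rw [hpre q, hKq q, Measure.prod_prod, measure_univ, mul_one]
      _ = ∫⁻ s, κμ s A ∂(π.map Prod.fst) := by
          rw [lintegral_map (κμ.measurable_coe hA) measurable_fst]
      _ = μ A := by rw [h1]; exact hκμint A hA
  have hγsnd : γ.map Prod.snd = ν := by
    ext A hA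
    rw [hγ, Measure.map_map measurable_snd measurable_snd,
      Measure.map_apply (measurable_snd.comp measurable_snd) hA,
      Measure.compProd_apply ((measurable_snd.comp measurable_snd) hA)]
    have hpre : ∀ q : ℝ × ℝ,
        Prod.mk q ⁻¹' (((Prod.snd ∘ Prod.snd : (ℝ × ℝ) × (X × X) → X)) ⁻¹' A)
          = (Set.univ : Set X) ×ˢ A := by
      intro q; ext z; simp
    calc ∫⁻ q, K q (Prod.mk q ⁻¹' ((Prod.snd ∘ Prod.snd) ⁻¹' A)) ∂π
        = ∫⁻ q, κν q.2 A ∂π := by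
          apply lintegral_congr
          intro q
          rw [hpre q, hKq q, Measure.prod_prod, measure_univ, one_mul]
      _ = ∫⁻ t, κν t A ∂(π.map Prod.snd) := by
          rw [lintegral_map (κν.measurable_coe hA) measurable_snd]
      _ = ν A := by rw [h2]; exact hκνint A hA
  refine ⟨γ, hγfst, hγsnd, ?_⟩
  have hg := aux_meas_cost p (by linarith) η
  rw [hγ, lintegral_map hg measurable_snd,
    Measure.lintegral_compProd
      (f := fun w : (ℝ × ℝ) × (X × X) => ENNReal.ofReal (|proj η w.2.1 - proj η w.2.2| ^ p))
      (hg.comp measurable_snd)]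
  have hae1 : ∀ᵐ q ∂π, κμ q.1 {x | proj η x ≠ q.1} = 0 := by
    rw [← h1] at hκμae
    have hms : MeasurableSet {s : ℝ | κμ s {x | proj η x ≠ s} = 0} :=
      hκμmeas (measurableSet_singleton 0)
    exact (MeasureTheory.ae_map_iff measurable_fst.aemeasurable hms).1 hκμae
  have hae2 : ∀ᵐ q ∂π, κν q.2 {x | proj η x ≠ q.2} = 0 := by
    rw [← h2] at hκνae
    have hms : MeasurableSet {s : ℝ | κν s {x | proj η x ≠ s} = 0} :=
      hκνmeas (measurableSet_singleton 0)
    exact (MeasureTheory.ae_map_iff measurable_snd.aemeasurable hms).1 hκνae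
  have hcong : ∀ᵐ q ∂π,
      (∫⁻ z, ENNReal.ofReal (|proj η z.1 - proj η z.2| ^ p) ∂(K q))
        = ENNReal.ofReal (dist q.1 q.2 ^ p) := by
    filter_upwards [hae1, hae2] with q hq1 hq2
    rw [hKq q, lintegral_prod _ (hg.aemeasurable)]
    have hx : ∀ᵐ x ∂(κμ q.1), proj η x = q.1 := by
      rw [ae_iff]; exact hq1
    have hy : ∀ᵐ y ∂(κν q.2), proj η y = q.2 := by
      rw [ae_iff]; exact hq2
    calc ∫⁻ x, ∫⁻ y, ENNReal.ofReal (|proj η x - proj η y| ^ p) ∂(κν q.2) ∂(κμ q.1)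
        = ∫⁻ _x, ENNReal.ofReal (|q.1 - q.2| ^ p) ∂(κμ q.1) := by
          apply lintegral_congr_ae
          filter_upwards [hx] with x hxx
          rw [hxx]
          calc ∫⁻ y, ENNReal.ofReal (|q.1 - proj η y| ^ p) ∂(κν q.2)
              = ∫⁻ _y, ENNReal.ofReal (|q.1 - q.2| ^ p) ∂(κν q.2) := by
                apply lintegral_congr_ae
                filter_upwards [hy] with y hyy
                rw [hyy]
            _ = ENNReal.ofReal (|q.1 - q.2| ^ p) := by
                rw [lintegral_const, measure_univ, mul_one]
      _ = ENNReal.ofReal (|q.1 - q.2| ^ p) := by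
          rw [lintegral_const, measure_univ, mul_one]
      _ = ENNReal.ofReal (dist q.1 q.2 ^ p) := by rw [Real.dist_eq]
  rw [transportCostE]
  exact lintegral_congr_ae hcong

private lemma aux_fin (p : ℝ) (hp : 1 ≤ p) (θ : X) (hθ : ‖θ‖ ≤ 1) (μ ν : Measure X)
    [IsProbabilityMeasure μ] [IsProbabilityMeasure ν] :
    WassersteinE p (μ.map (proj θ)) (ν.map (proj θ)) ≤
      ((MpE p μ) ^ (1/p) + (MpE p ν) ^ (1/p)) ^ p := by
  have hfst : (μ.prod ν).map Prod.fst = μ := by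
    rw [show (μ.prod ν).map Prod.fst = (μ.prod ν).fst from rfl, Measure.fst_prod]
  have hsnd : (μ.prod ν).map Prod.snd = ν := by
    rw [show (μ.prod ν).map Prod.snd = (μ.prod ν).snd from rfl, Measure.snd_prod]
  calc WassersteinE p (μ.map (proj θ)) (ν.map (proj θ))
      ≤ ∫⁻ z, ENNReal.ofReal (|proj θ z.1 - proj θ z.2| ^ p) ∂(μ.prod ν) :=
        aux_wass_le p hp θ μ ν _ hfst hsnd
    _ ≤ ∫⁻ z, ENNReal.ofReal (‖z.1 - z.2‖ ^ p) ∂(μ.prod ν) := by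
        apply lintegral_mono
        intro z
        apply ENNReal.ofReal_le_ofReal
        apply Real.rpow_le_rpow (abs_nonneg _) _ (by linarith)
        have e1 : proj θ z.1 - proj θ z.2 = ⟪θ, z.1 - z.2⟫ := by
          simp only [proj, inner_sub_right]
        rw [e1]
        calc |⟪θ, z.1 - z.2⟫| ≤ ‖θ‖ * ‖z.1 - z.2‖ := abs_real_inner_le_norm _ _
          _ ≤ 1 * ‖z.1 - z.2‖ := by gcongr
          _ = ‖z.1 - z.2‖ := one_mul _
    _ ≤ _ := aux_minkowski p hp μ ν _ hfst hsnd

private lemma aux_key (p : ℝ) (hp : 1 ≤ p) (θ η : X) (hθ : ‖θ‖ ≤ 1) (hη : ‖η‖ ≤ 1)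
    (μ ν : Measure X) [IsProbabilityMeasure μ] [IsProbabilityMeasure ν] :
    WassersteinE p (μ.map (proj θ)) (ν.map (proj θ)) ≤
      WassersteinE p (μ.map (proj η)) (ν.map (proj η)) +
        ENNReal.ofReal (p * ‖θ - η‖) * ((MpE p μ) ^ (1/p) + (MpE p ν) ^ (1/p)) ^ p := by
  set M := ((MpE p μ) ^ (1/p) + (MpE p ν) ^ (1/p)) ^ p with hM
  set D := ENNReal.ofReal (p * ‖θ - η‖) * M with hD
  have main : ∀ π : Measure (ℝ × ℝ), π.map Prod.fst = μ.map (proj η) →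
      π.map Prod.snd = ν.map (proj η) →
      WassersteinE p (μ.map (proj θ)) (ν.map (proj θ)) ≤ transportCostE p π + D := by
    intro π h1 h2
    haveI : IsProbabilityMeasure π := by
      constructor
      have hu := congrArg (fun m : Measure ℝ => m Set.univ) h1
      simp only [Measure.map_apply measurable_fst MeasurableSet.univ,
        Measure.map_apply (measurable_proj' η) MeasurableSet.univ, Set.preimage_univ,
        measure_univ] at hu
      exact hu
    obtain ⟨γ, hγ1, hγ2, hγcost⟩ := aux_lift p hp η μ ν π h1 h2
    have hpt : ∀ z : X × X, ENNReal.ofReal (|proj θ z.1 - proj θ z.2| ^ p) ≤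
        ENNReal.ofReal (|proj η z.1 - proj η z.2| ^ p) +
          ENNReal.ofReal (p * ‖θ - η‖) * ENNReal.ofReal (‖z.1 - z.2‖ ^ p) := by
      intro z
      have e1 : proj θ z.1 - proj θ z.2 = ⟪θ, z.1 - z.2⟫ := by simp only [proj, inner_sub_right]
      have e2 : proj η z.1 - proj η z.2 = ⟪η, z.1 - z.2⟫ := by simp only [proj, inner_sub_right]
      have h := aux_pointwise p hp θ η hθ hη (z.1 - z.2)
      rw [e1, e2]
      calc ENNReal.ofReal (|⟪θ, z.1 - z.2⟫| ^ p)
          ≤ ENNReal.ofReal (|⟪η, z.1 - z.2⟫| ^ p + p * ‖θ - η‖ * ‖z.1 - z.2‖ ^ p) :=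
            ENNReal.ofReal_le_ofReal h
        _ = _ := by
            rw [ENNReal.ofReal_add (by positivity) (by positivity),
              ENNReal.ofReal_mul (by positivity)]
    calc WassersteinE p (μ.map (proj θ)) (ν.map (proj θ))
        ≤ ∫⁻ z, ENNReal.ofReal (|proj θ z.1 - proj θ z.2| ^ p) ∂γ :=
          aux_wass_le p hp θ μ ν γ hγ1 hγ2
      _ ≤ ∫⁻ z, (ENNReal.ofReal (|proj η z.1 - proj η z.2| ^ p) +
            ENNReal.ofReal (p * ‖θ - η‖) * ENNReal.ofReal (‖z.1 - z.2‖ ^ p)) ∂γ :=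
          lintegral_mono hpt
      _ = (∫⁻ z, ENNReal.ofReal (|proj η z.1 - proj η z.2| ^ p) ∂γ) +
            ENNReal.ofReal (p * ‖θ - η‖) * ∫⁻ z, ENNReal.ofReal (‖z.1 - z.2‖ ^ p) ∂γ := by
          rw [lintegral_add_left (aux_meas_cost p (by linarith) η),
            lintegral_const_mul _ (aux_meas_norm_cost p (by linarith))]
      _ ≤ transportCostE p π + D := by
          rw [hγcost, hD]
          exact add_le_add_right
            (mul_le_mul_right (aux_minkowski p hp μ ν γ hγ1 hγ2) _) _
  conv_rhs => rw [WassersteinE]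
  simp only [ENNReal.iInf_add]
  exact le_iInf fun π => le_iInf fun h1 => le_iInf fun h2 => main π h1 h2

end HilbertAux
end AuxStmt5
/-- `θ ↦ W_p^p(P_θ#μ, P_θ#ν)` is Lipschitz on the unit sphere with
constant `p·2^{p−1}·max{M_p(μ), M_p(ν)}^{(p−1)/p}·(M_p(μ)^{1/p} + M_p(ν)^{1/p})`. -/
theorem stmt5 {X : Type*} [NormedAddCommGroup X] [InnerProductSpace ℝ X]
    [CompleteSpace X] [SecondCountableTopology X] [MeasurableSpace X] [BorelSpace X]
    (p : ℝ) (hp : 1 ≤ p) (μ ν : Measure X) [IsProbabilityMeasure μ] [IsProbabilityMeasure ν]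
    (hμ : MpE p μ < ⊤) (hν : MpE p ν < ⊤) :
    LipschitzWith
      (Real.toNNReal (p * 2 ^ (p - 1) * max (Mp p μ) (Mp p ν) ^ ((p - 1) / p) *
        ((Mp p μ) ^ (1 / p) + (Mp p ν) ^ (1 / p))))
      (fun θ : sphere (0 : X) 1 =>
        (Wp p (μ.map (proj (θ : X))) (ν.map (proj (θ : X)))) ^ p) := by
  have hp0 : (0:ℝ) < p := by linarith
  have hp0' : p ≠ 0 := ne_of_gt hp0
  set m1 := Mp p μ with hm1
  set m2 := Mp p ν with hm2
  have hm10 : 0 ≤ m1 := ENNReal.toReal_nonneg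
  have hm20 : 0 ≤ m2 := ENNReal.toReal_nonneg
  set a := m1 ^ (1/p) with hadef
  set b := m2 ^ (1/p) with hbdef
  have ha0 : 0 ≤ a := Real.rpow_nonneg hm10 _
  have hb0 : 0 ≤ b := Real.rpow_nonneg hm20 _
  have hmax0 : 0 ≤ max m1 m2 := le_trans hm10 (le_max_left _ _)
  set L := p * 2 ^ (p - 1) * max m1 m2 ^ ((p - 1) / p) * (a + b) with hL
  have hL0 : 0 ≤ L := by
    have h2p : (0:ℝ) ≤ 2 ^ (p-1) := Real.rpow_nonneg (by norm_num) _
    have hM : (0:ℝ) ≤ max m1 m2 ^ ((p-1)/p) := Real.rpow_nonneg hmax0 _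
    have : (0:ℝ) ≤ a + b := by linarith
    positivity
  have hMμ : MpE p μ = ENNReal.ofReal m1 := (ENNReal.ofReal_toReal hμ.ne).symm
  have hMν : MpE p ν = ENNReal.ofReal m2 := (ENNReal.ofReal_toReal hν.ne).symm
  have hMconv : ((MpE p μ) ^ (1/p) + (MpE p ν) ^ (1/p) : ℝ≥0∞) = ENNReal.ofReal (a + b) := by
    rw [hMμ, hMν, ENNReal.ofReal_rpow_of_nonneg hm10 (by positivity),
      ENNReal.ofReal_rpow_of_nonneg hm20 (by positivity), ← ENNReal.ofReal_add ha0 hb0]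
  have hMconv2 : (((MpE p μ) ^ (1/p) + (MpE p ν) ^ (1/p) : ℝ≥0∞)) ^ p
      = ENNReal.ofReal ((a + b) ^ p) := by
    rw [hMconv, ENNReal.ofReal_rpow_of_nonneg (by positivity) (le_of_lt hp0)]
  set W : sphere (0:X) 1 → ℝ≥0∞ :=
    fun ϑ => WassersteinE p (μ.map (proj (ϑ:X))) (ν.map (proj (ϑ:X))) with hW
  have hWfin : ∀ ϑ, W ϑ < ⊤ := by
    intro ϑ
    have hϑ : ‖(ϑ:X)‖ = 1 := mem_sphere_zero_iff_norm.1 ϑ.2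
    refine lt_of_le_of_lt (aux_fin p hp (ϑ:X) (le_of_eq hϑ) μ ν) ?_
    rw [hMconv2]
    exact ENNReal.ofReal_lt_top
  have heq : (fun ϑ : sphere (0:X) 1 =>
      (Wp p (μ.map (proj (ϑ:X))) (ν.map (proj (ϑ:X)))) ^ p) = fun ϑ => (W ϑ).toReal := by
    funext ϑ
    rw [Wp, ← Real.rpow_mul ENNReal.toReal_nonneg, one_div, inv_mul_cancel₀ hp0',
      Real.rpow_one]
  rw [heq]
  have halg : p * (a + b) ^ p ≤ L := by
    rcases eq_or_lt_of_le (by positivity : (0:ℝ) ≤ a + b) with h0 | h0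
    · rw [← h0, Real.zero_rpow hp0', mul_zero, hL, ← h0, mul_zero]
    · have hab : a + b ≤ 2 * max a b := by
        rcases le_total a b with h | h
        · rw [max_eq_right h]; linarith
        · rw [max_eq_left h]; linarith
      have hmaxab0 : 0 ≤ max a b := le_trans ha0 (le_max_left a b)
      have hmaxeq : max a b = (max m1 m2) ^ (1/p) := by
        rcases le_total m1 m2 with h | h
        · rw [max_eq_right h, max_eq_right (Real.rpow_le_rpow hm10 h (by positivity))]
        · rw [max_eq_left h, max_eq_left (Real.rpow_le_rpow hm20 h (by positivity))]
      have hstep1 : (a + b) ^ (p - 1) ≤ (2 * max a b) ^ (p - 1) :=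
        Real.rpow_le_rpow (by positivity) hab (by linarith)
      have hstep2 : (2 * max a b) ^ (p-1) = 2 ^ (p-1) * (max a b) ^ (p-1) :=
        Real.mul_rpow (by norm_num) hmaxab0
      have hstep3 : (max a b) ^ (p-1) = (max m1 m2) ^ ((p-1)/p) := by
        rw [hmaxeq, ← Real.rpow_mul hmax0]
        congr 1
        field_simp
      have hsplit : (a + b) ^ p = (a + b) ^ (p - 1) * (a + b) := by
        rw [← Real.rpow_add_one (ne_of_gt h0)]
        ring_nf
      calc p * (a + b) ^ p = p * ((a + b) ^ (p-1) * (a + b)) := by rw [hsplit]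
        _ ≤ p * ((2 ^ (p-1) * (max m1 m2) ^ ((p-1)/p)) * (a + b)) := by
            apply mul_le_mul_of_nonneg_left _ (by linarith)
            apply mul_le_mul_of_nonneg_right _ (by positivity)
            calc (a+b)^(p-1) ≤ (2*max a b)^(p-1) := hstep1
              _ = 2^(p-1)*(max a b)^(p-1) := hstep2
              _ = 2^(p-1)*(max m1 m2)^((p-1)/p) := by rw [hstep3]
        _ = L := by rw [hL]; ring
  have hstep : ∀ u v : sphere (0:X) 1,
      (W u).toReal - (W v).toReal ≤ L * ‖(u:X) - (v:X)‖ := by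
    intro u v
    have hu1 : ‖(u:X)‖ ≤ 1 := le_of_eq (mem_sphere_zero_iff_norm.1 u.2)
    have hv1 : ‖(v:X)‖ ≤ 1 := le_of_eq (mem_sphere_zero_iff_norm.1 v.2)
    have hk := aux_key p hp (u:X) (v:X) hu1 hv1 μ ν
    rw [hMconv2, ← ENNReal.ofReal_mul (by positivity)] at hk
    have h1 : (W u).toReal ≤
        ((W v) + ENNReal.ofReal (p * ‖(u:X)-(v:X)‖ * (a+b)^p)).toReal := by
      apply ENNReal.toReal_mono _ hk
      exact (ENNReal.add_ne_top.2 ⟨(hWfin v).ne, ENNReal.ofReal_ne_top⟩)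
    rw [ENNReal.toReal_add (hWfin v).ne ENNReal.ofReal_ne_top,
      ENNReal.toReal_ofReal (by positivity)] at h1
    have h2 : p * ‖(u:X)-(v:X)‖ * (a+b)^p ≤ L * ‖(u:X)-(v:X)‖ := by
      have hmr := mul_le_mul_of_nonneg_right halg (norm_nonneg ((u:X)-(v:X)))
      calc p * ‖(u:X)-(v:X)‖ * (a+b)^p = (p * (a+b)^p) * ‖(u:X)-(v:X)‖ := by ring
        _ ≤ L * ‖(u:X)-(v:X)‖ := hmr
    linarith
  apply LipschitzWith.of_dist_le_mul
  intro ϑ ϑ'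
  have hdist : dist ϑ ϑ' = ‖(ϑ:X) - (ϑ':X)‖ := by rw [Subtype.dist_eq, dist_eq_norm]
  have hcoe : ((Real.toNNReal L : ℝ≥0) : ℝ) = L := Real.coe_toNNReal L hL0
  rw [Real.dist_eq, hcoe, hdist, abs_sub_le_iff]
  constructor
  · exact hstep ϑ ϑ'
  · rw [norm_sub_rev]
    exact hstep ϑ' ϑ
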